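/- The graded commutator [f,g] = f ∘ g - (-1)^{mn} g ∘ f of the α-twisted pre-Lie product on ⊕_m V^α_m satisfies the graded Jacobi identity, making ⊕_m V^α_m a graded Lie algebra (with f ∈ V^α_m of degree m). -/

import Mathlib

/-- Reindex a tuple along an equality of lengths. -/
def reindex {A : Type*} {p q : ℕ} (h : q = p) (a : Fin p → A) : Fin q → A :=
  fun k => a (Fin.cast h k)

/-- `f` commutes with `α`, i.e. `α ∘ f = f ∘ α^{⊗n}` (membership condition for `Cⁿ_α`/`V^α`). -/
def IsCompat {A : Type*} (α : A → A) {n : ℕ} (f : (Fin n → A) → A) : Prop :=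
  ∀ a : Fin n → A, α (f a) = f fun i => α (a i)

/-- The α-twisted Hochschild coboundary on `n`-cochains. -/
def homDelta {A : Type*} [AddCommGroup A] (μ : A → A → A) (α : A → A) (n : ℕ)
    (f : (Fin n → A) → A) : (Fin (n + 1) → A) → A := fun a =>
  μ (α^[n - 1] (a 0)) (f fun i => a i.succ)
    + ∑ i : Fin n, ((-1 : ℤ) ^ ((i : ℕ) + 1)) •
        f (fun j => if (j : ℕ) < (i : ℕ) then α (a j.castSucc)
          else if (j : ℕ) = (i : ℕ) then μ (a j.castSucc) (a j.succ)
          else α (a j.succ))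
    + ((-1 : ℤ) ^ (n + 1)) • μ (f fun i => a i.castSucc) (α^[n - 1] (a (Fin.last n)))

/-- The α-twisted insertion `f ∘ᵢ g` for `f ∈ V^α_m`, `g ∈ V^α_n`. -/
def circI {A : Type*} (α : A → A) {m n : ℕ} (i : Fin (m + 1))
    (f : (Fin (m + 1) → A) → A) (g : (Fin (n + 1) → A) → A) :
    (Fin (m + n + 1) → A) → A := fun a =>
  f fun k => if (k : ℕ) < (i : ℕ) then α^[n] (a ⟨(k : ℕ), by omega⟩)
    else if (k : ℕ) = (i : ℕ) then g (fun l => a ⟨(i : ℕ) + (l : ℕ), by omega⟩)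
    else α^[n] (a ⟨(k : ℕ) + n, by omega⟩)

/-- The α-twisted pre-Lie product `f ∘ g = Σᵢ (-1)^{ni} f ∘ᵢ g`. -/
def vcirc {A : Type*} [AddCommGroup A] (α : A → A) {m n : ℕ}
    (f : (Fin (m + 1) → A) → A) (g : (Fin (n + 1) → A) → A) :
    (Fin (m + n + 1) → A) → A := fun a =>
  ∑ i : Fin (m + 1), ((-1 : ℤ) ^ (n * (i : ℕ))) • circI α i f g a

/-- The graded (Gerstenhaber) bracket `[f,g] = f ∘ g - (-1)^{mn} g ∘ f` on `⊕ V^α_m`. -/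
def vbracket {A : Type*} [AddCommGroup A] (α : A → A) {m n : ℕ}
    (f : (Fin (m + 1) → A) → A) (g : (Fin (n + 1) → A) → A) :
    (Fin (m + n + 1) → A) → A := fun a =>
  vcirc α f g a - ((-1 : ℤ) ^ (m * n)) • vcirc α g f (reindex (by omega) a)

/-- The cup product of an `(m+1)`-cochain and an `(n+1)`-cochain. -/
def cupProd {A : Type*} (μ : A → A → A) (α : A → A) {m n : ℕ}
    (f : (Fin (m + 1) → A) → A) (g : (Fin (n + 1) → A) → A) :
    (Fin (m + n + 2) → A) → A := fun a =>
  μ (α^[n] (f fun i => a ⟨(i : ℕ), by omega⟩))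
    (α^[m] (g fun i => a ⟨m + 1 + (i : ℕ), by omega⟩))

/-!
Since the bracket is the graded commutator of `∘`, antisymmetry is immediate, and the Jacobi
identity follows by pure algebra once `∘` is graded pre-Lie: the associator
`(f ∘ g) ∘ h - f ∘ (g ∘ h)` is symmetric in `g` and `h` up to the sign `(-1)^{np}`.
To see this, expand `(f ∘ g) ∘ h` into double insertions, `g` into slot `i` of `f` and then `h`
into slot `j` of `f ∘ᵢ g`. The terms with `i ≤ j ≤ i + n` insert `h` into `g`; by multilinearity
of `f` they add up to `f ∘ (g ∘ h)`. In the remaining terms `g` and `h` occupy disjoint slots of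
`f`, and since `g` and `h` commute with `α` the two insertions can be performed in either order;
this matches them, with the sign `(-1)^{np}`, with the corresponding terms of `(f ∘ h) ∘ g`.
-/

open Finset

theorem neg_one_pow_mul_self (k : ℕ) : (-1 : ℤ) ^ k * (-1) ^ k = 1 := by
  rw [← mul_pow, neg_one_mul, neg_neg, one_pow]

theorem neg_one_pow_add_two_mul (k l : ℕ) : (-1 : ℤ) ^ (k + 2 * l) = (-1) ^ k := by
  rw [pow_add, pow_mul, neg_one_sq, one_pow, mul_one]

-- `u, v, w` stand for `(-1)^{mn}, (-1)^{mp}, (-1)^{np}`, and `fg_h` for `(f ∘ g) ∘ h`, etc.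
theorem jacobi_of_preLie_relations {M : Type*} [AddCommGroup M] {u v w : ℤ} (hu : u * u = 1)
    (hv : v * v = 1) (hw : w * w = 1)
    {fg_h f_gh fh_g f_hg gh_f g_hf gf_h g_fh hf_g h_fg hg_f h_gf : M}
    (hf : fg_h - f_gh = w • (fh_g - f_hg)) (hg : gh_f - g_hf = v • (gf_h - g_fh))
    (hh : hf_g - h_fg = u • (hg_f - h_gf)) :
    v • (fg_h - u • gf_h - (v * w) • (h_fg - u • h_gf))
      + u • (gh_f - w • hg_f - (u * v) • (f_gh - w • f_hg))
      + w • (hf_g - v • fh_g - (w * u) • (g_hf - v • g_fh)) = 0 := by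
  linear_combination (norm := module) v • hf + u • hg + w • hh + hu • (v • (w • f_hg - f_gh))
    + hv • (w • (u • h_gf - h_fg)) + hw • (u • (v • g_fh - g_hf))

section

variable {A : Type*}

theorem IsCompat.iterate {α : A → A} {k : ℕ} {F : (Fin k → A) → A} (hF : IsCompat α F)
    (t : ℕ) (a : Fin k → A) : α^[t] (F a) = F fun i => α^[t] (a i) := by
  induction t generalizing a with
  | zero => rfl
  | succ t ih => simp only [Function.iterate_succ_apply', ih, hF _]

theorem reindex_reindex {p q r : ℕ} (e : q = p) (e' : r = q) (a : Fin p → A) :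
    reindex e' (reindex e a) = reindex (e'.trans e) a :=
  rfl

theorem reindex_self {p : ℕ} (e : p = p) (a : Fin p → A) : reindex e a = a :=
  rfl

theorem circI_eq_update (α : A → A) {m n : ℕ} (i : Fin (m + 1))
    (f : (Fin (m + 1) → A) → A) (g : (Fin (n + 1) → A) → A) (a : Fin (m + n + 1) → A) :
    circI α i f g a = f (Function.update
      (fun k : Fin (m + 1) => if (k : ℕ) < i then α^[n] (a ⟨k, by omega⟩)
        else α^[n] (a ⟨k + n, by omega⟩))
      i (g fun l => a ⟨i + l, by omega⟩)) := by
  unfold circI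
  congr 1
  funext k
  rcases eq_or_ne k i with rfl | hk
  · simp
  · simp [Function.update_of_ne hk, Fin.val_ne_of_ne hk]

theorem circI_circI_of_le (α : A → A) {m n p : ℕ} (f : (Fin (m + 1) → A) → A)
    (g : (Fin (n + 1) → A) → A) (h : (Fin (p + 1) → A) → A) (i : Fin (m + 1)) (t : Fin (n + 1))
    (a : Fin (m + n + p + 1) → A) :
    circI α ⟨i + t, by omega⟩ (circI α i f g) h a
      = circI α i f (circI α t g h) (reindex (by omega) a) := by
  simp only [circI, reindex, Fin.cast_mk, Function.iterate_add_apply, add_assoc,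
    add_lt_add_iff_left, add_right_inj]
  congr 1
  funext k
  split_ifs <;> first | rfl | omega

-- Insertions into disjoint slots commute: the powers of `α` that one insertion applies to the
-- arguments of the other cochain pass through that cochain by compatibility.
theorem circI_circI_of_lt (α : A → A) {m n p : ℕ} (f : (Fin (m + 1) → A) → A)
    {g : (Fin (n + 1) → A) → A} {h : (Fin (p + 1) → A) → A} (hg : IsCompat α g)
    (hh : IsCompat α h) (i : Fin (m + 1)) (j : Fin (m + n + 1)) (hji : (j : ℕ) < i)
    (a : Fin (m + n + p + 1) → A) :
    circI α j (circI α i f g) h a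
      = circI α ⟨i + p, by omega⟩ (circI α ⟨j, by omega⟩ f h) g (reindex (by omega) a) := by
  simp only [circI, reindex, Fin.cast_mk]
  congr 1
  funext k
  split_ifs <;> try (exfalso; omega)
  all_goals simp only [hg.iterate, hh.iterate, ← Function.iterate_add_apply, add_comm n p,
    Nat.add_right_comm _ n p]
  all_goals
    congr 1
    funext l
    have := l.isLt
    split_ifs <;> first | rfl | omega | simp only [Nat.add_right_comm]

variable [AddCommGroup A]

theorem vcirc_sub_left (α : A → A) {m n : ℕ} (f₁ f₂ : (Fin (m + 1) → A) → A) (c : ℤ)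
    (g : (Fin (n + 1) → A) → A) (a : Fin (m + n + 1) → A) :
    vcirc α (fun b => f₁ b - c • f₂ b) g a = vcirc α f₁ g a - c • vcirc α f₂ g a := by
  simp only [vcirc, circI, smul_sub, sum_sub_distrib, smul_sum, smul_comm c]

theorem vcirc_reindex_left (α : A → A) {M M' n : ℕ} (e : M' + 1 = M + 1)
    (f : (Fin (M' + 1) → A) → A) (g : (Fin (n + 1) → A) → A) (a : Fin (M + n + 1) → A) :
    vcirc α (fun b => f (reindex e b)) g a = vcirc α f g (reindex (by omega) a) := by
  obtain rfl : M' = M := by omega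
  rfl

theorem vcirc_reindex_right (α : A → A) {m N N' : ℕ} (f : (Fin (m + 1) → A) → A)
    (e : N' + 1 = N + 1) (g : (Fin (N' + 1) → A) → A) (a : Fin (m + N + 1) → A) :
    vcirc α f (fun b => g (reindex e b)) a = vcirc α f g (reindex (by omega) a) := by
  obtain rfl : N' = N := by omega
  rfl

theorem vbracket_antisymm (α : A → A) {m n : ℕ} (f : (Fin (m + 1) → A) → A)
    (g : (Fin (n + 1) → A) → A) (a : Fin (m + n + 1) → A) :
    vbracket α f g a = -((-1 : ℤ) ^ (m * n)) • vbracket α g f (reindex (by omega) a) := by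
  rw [vbracket, vbracket, reindex_reindex, reindex_self, Nat.mul_comm n m, smul_sub, smul_smul,
    neg_mul, neg_one_pow_mul_self, neg_smul, neg_smul, one_smul]
  abel

def doubleInsert (α : A → A) {m n p : ℕ} (f : (Fin (m + 1) → A) → A)
    (g : (Fin (n + 1) → A) → A) (h : (Fin (p + 1) → A) → A)
    (ij : Fin (m + 1) × Fin (m + n + 1)) (a : Fin (m + n + p + 1) → A) : A :=
  ((-1 : ℤ) ^ (n * ij.1 + p * ij.2)) • circI α ij.2 (circI α ij.1 f g) h a

theorem vcirc_vcirc_eq_sum (α : A → A) {m n p : ℕ} (f : (Fin (m + 1) → A) → A)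
    (g : (Fin (n + 1) → A) → A) (h : (Fin (p + 1) → A) → A) (a : Fin (m + n + p + 1) → A) :
    vcirc α (vcirc α f g) h a = ∑ ij, doubleInsert α f g h ij a := by
  rw [Fintype.sum_prod_type, sum_comm]
  simp only [vcirc, circI, doubleInsert, smul_sum, smul_smul, ← pow_add, add_comm]

theorem sum_eq_sum_lt_add_sum_le_le_add_sum_lt {M : Type*} [AddCommMonoid M] {m n : ℕ}
    (φ : Fin (m + 1) × Fin (m + n + 1) → M) :
    ∑ ij, φ ij = ∑ ij with (ij.2 : ℕ) < ij.1, φ ij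
      + ∑ ij with (ij.1 : ℕ) ≤ ij.2 ∧ (ij.2 : ℕ) ≤ ij.1 + n, φ ij
      + ∑ ij with (ij.1 : ℕ) + n < ij.2, φ ij := by
  simp only [sum_filter, ← sum_add_distrib]
  refine sum_congr rfl fun ij _ => ?_
  split_ifs <;> first | omega | simp

theorem sum_lt_doubleInsert (α : A → A) {m n p : ℕ} (f : (Fin (m + 1) → A) → A)
    {g : (Fin (n + 1) → A) → A} {h : (Fin (p + 1) → A) → A} (hg : IsCompat α g)
    (hh : IsCompat α h) (a : Fin (m + n + p + 1) → A) :
    ∑ ij with (ij.2 : ℕ) < ij.1, doubleInsert α f g h ij a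
      = ((-1 : ℤ) ^ (n * p)) •
        ∑ ij with (ij.1 : ℕ) + p < ij.2, doubleInsert α f h g ij (reindex (by omega) a) := by
  rw [smul_sum]
  refine sum_bij'
    (fun ij hij => (⟨ij.2, by have := (mem_filter.1 hij).2; omega⟩, ⟨ij.1 + p, by omega⟩))
    (fun ij hij => (⟨ij.2 - p, by omega⟩, ⟨ij.1, by omega⟩)) ?_ ?_ ?_ ?_ ?_
  · rintro ⟨i, j⟩ hij
    have : (j : ℕ) < i := (mem_filter.1 hij).2
    simp only [mem_filter, mem_univ, true_and]
    omega
  · rintro ⟨i, j⟩ hij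
    have : (i : ℕ) + p < j := (mem_filter.1 hij).2
    simp only [mem_filter, mem_univ, true_and]
    omega
  · rintro ⟨i, j⟩ -
    ext <;> simp
  · rintro ⟨i, j⟩ hij
    have : (i : ℕ) + p < j := (mem_filter.1 hij).2
    exact Prod.ext rfl (Fin.ext (Nat.sub_add_cancel (by omega : p ≤ j)))
  · rintro ⟨i, j⟩ hij
    have hji : (j : ℕ) < i := (mem_filter.1 hij).2
    simp only [doubleInsert, circI_circI_of_lt α f hg hh i j hji, smul_smul, ← pow_add]
    rw [show n * p + (p * j + n * (i + p)) = n * i + p * j + 2 * (n * p) by ring,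
      neg_one_pow_add_two_mul]

variable {R : Type*} [Semiring R] [Module R A]

theorem vcirc_sub_right (α : A → A) {m n : ℕ}
    (F : MultilinearMap R (fun _ : Fin (m + 1) => A) A) (c : ℤ)
    (g₁ g₂ : (Fin (n + 1) → A) → A) (a : Fin (m + n + 1) → A) :
    vcirc α F (fun b => g₁ b - c • g₂ b) a = vcirc α F g₁ a - c • vcirc α F g₂ a := by
  simp only [vcirc, circI_eq_update, ← F.toLinearMap_apply, map_sub, map_zsmul, smul_sub,
    sum_sub_distrib, smul_sum, smul_comm c]

theorem vbracket_vbracket (α : A → A) {x y z : ℕ} (f : (Fin (x + 1) → A) → A)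
    (g : (Fin (y + 1) → A) → A) (F : MultilinearMap R (fun _ : Fin (z + 1) => A) A)
    (a : Fin (x + y + z + 1) → A) :
    vbracket α (vbracket α f g) F a
      = vcirc α (vcirc α f g) F a
        - ((-1 : ℤ) ^ (x * y)) • vcirc α (vcirc α g f) F (reindex (by omega) a)
        - ((-1 : ℤ) ^ (x * z) * (-1) ^ (y * z)) •
          (vcirc α F (vcirc α f g) (reindex (by omega) a)
            - ((-1 : ℤ) ^ (x * y)) • vcirc α F (vcirc α g f) (reindex (by omega) a)) := by
  unfold vbracket
  rw [vcirc_sub_left, vcirc_sub_right, vcirc_reindex_left, vcirc_reindex_right, add_mul, pow_add]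
  rfl

theorem circI_vcirc_right (α : A → A) {m n p : ℕ} (i : Fin (m + 1))
    (F : MultilinearMap R (fun _ : Fin (m + 1) => A) A) (g : (Fin (n + 1) → A) → A)
    (h : (Fin (p + 1) → A) → A) (a : Fin (m + (n + p) + 1) → A) :
    circI α i F (vcirc α g h) a
      = ∑ t : Fin (n + 1), ((-1 : ℤ) ^ (p * (t : ℕ))) • circI α i F (circI α t g h) a := by
  simp only [circI_eq_update, ← F.toLinearMap_apply, vcirc, map_sum, map_zsmul]

theorem sum_le_le_doubleInsert (α : A → A) {m n p : ℕ}
    (F : MultilinearMap R (fun _ : Fin (m + 1) => A) A) (g : (Fin (n + 1) → A) → A)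
    (h : (Fin (p + 1) → A) → A) (a : Fin (m + n + p + 1) → A) :
    ∑ ij with (ij.1 : ℕ) ≤ ij.2 ∧ (ij.2 : ℕ) ≤ ij.1 + n, doubleInsert α F g h ij a
      = vcirc α F (vcirc α g h) (reindex (by omega) a) := by
  have hexpand : vcirc α F (vcirc α g h) (reindex (by omega) a)
      = ∑ it : Fin (m + 1) × Fin (n + 1),
          doubleInsert α F g h (it.1, ⟨it.1 + it.2, by omega⟩) a := by
    rw [vcirc, Fintype.sum_prod_type]
    simp only [circI_vcirc_right, smul_sum, smul_smul, ← pow_add, doubleInsert,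
      ← circI_circI_of_le]
    refine sum_congr rfl fun i _ => sum_congr rfl fun t _ => ?_
    ring_nf
  rw [hexpand]
  symm
  refine sum_nbij (fun it => (it.1, ⟨it.1 + it.2, by omega⟩)) ?_ ?_ ?_ fun _ _ => rfl
  · intro it _
    simp only [mem_filter, mem_univ, true_and]
    omega
  · rintro ⟨i, t⟩ - ⟨i', t'⟩ - heq
    simp only [Prod.mk.injEq, Fin.ext_iff] at heq
    exact Prod.ext (Fin.ext heq.1) (Fin.ext (by omega : (t : ℕ) = t'))
  · rintro ⟨i, j⟩ hij
    simp only [coe_filter, mem_univ, true_and, Set.mem_ofPred_eq] at hij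
    exact ⟨(i, ⟨j - i, by omega⟩), by simp, Prod.ext rfl (Fin.ext (Nat.add_sub_cancel' hij.1))⟩

theorem vcirc_vcirc_sub_vcirc_vcirc (α : A → A) {m n p : ℕ}
    (F : MultilinearMap R (fun _ : Fin (m + 1) => A) A) (g : (Fin (n + 1) → A) → A)
    (h : (Fin (p + 1) → A) → A) (a : Fin (m + n + p + 1) → A) :
    vcirc α (vcirc α F g) h a - vcirc α F (vcirc α g h) (reindex (by omega) a)
      = ∑ ij with (ij.2 : ℕ) < ij.1, doubleInsert α F g h ij a
        + ∑ ij with (ij.1 : ℕ) + n < ij.2, doubleInsert α F g h ij a := by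
  rw [vcirc_vcirc_eq_sum, sum_eq_sum_lt_add_sum_le_le_add_sum_lt, sum_le_le_doubleInsert]
  abel

theorem vcirc_preLie (α : A → A) {m n p : ℕ}
    (F : MultilinearMap R (fun _ : Fin (m + 1) => A) A) {g : (Fin (n + 1) → A) → A}
    {h : (Fin (p + 1) → A) → A} (hg : IsCompat α g) (hh : IsCompat α h)
    (a : Fin (m + n + p + 1) → A) :
    vcirc α (vcirc α F g) h a - vcirc α F (vcirc α g h) (reindex (by omega) a)
      = ((-1 : ℤ) ^ (n * p)) • (vcirc α (vcirc α F h) g (reindex (by omega) a)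
        - vcirc α F (vcirc α h g) (reindex (by omega) a)) := by
  have hlt := sum_lt_doubleInsert α F hg hh a
  have hgt := sum_lt_doubleInsert α F hh hg (reindex (by omega) a)
  have hhg := vcirc_vcirc_sub_vcirc_vcirc α F h g (reindex (by omega) a)
  simp only [reindex_reindex, reindex_self] at hgt hhg
  rw [Nat.mul_comm p n] at hgt
  rw [vcirc_vcirc_sub_vcirc_vcirc, hhg, hlt, hgt, smul_add, smul_smul, neg_one_pow_mul_self,
    one_smul, add_comm]

end

/-- The graded commutator `[f,g] = f ∘ g - (-1)^{mn} g ∘ f` of the α-twisted pre-Lie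
product is graded antisymmetric and satisfies the graded Jacobi identity, making
`⊕ V^α_m` a graded Lie algebra (with `f ∈ V^α_m` of degree `m`). -/
theorem vbracket_graded_Lie
    {K : Type*} [Field K] {A : Type*} [AddCommGroup A] [Module K A]
    (α : A →ₗ[K] A) (m n p : ℕ)
    (f : MultilinearMap K (fun _ : Fin (m + 1) => A) A)
    (g : MultilinearMap K (fun _ : Fin (n + 1) => A) A)
    (h : MultilinearMap K (fun _ : Fin (p + 1) => A) A)
    (hf : IsCompat (⇑α) (⇑f)) (hg : IsCompat (⇑α) (⇑g)) (hh : IsCompat (⇑α) (⇑h)) :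
    (∀ a : Fin (m + n + 1) → A,
      vbracket (⇑α) (⇑f) (⇑g) a
        = -((-1 : ℤ) ^ (m * n)) • vbracket (⇑α) (⇑g) (⇑f) (reindex (by omega) a)) ∧
    (∀ a : Fin (m + n + p + 1) → A,
      ((-1 : ℤ) ^ (m * p)) • vbracket (⇑α) (vbracket (⇑α) (⇑f) (⇑g)) (⇑h) a
        + ((-1 : ℤ) ^ (n * m)) •
            vbracket (⇑α) (vbracket (⇑α) (⇑g) (⇑h)) (⇑f) (reindex (by omega) a)
        + ((-1 : ℤ) ^ (p * n)) •
            vbracket (⇑α) (vbracket (⇑α) (⇑h) (⇑f)) (⇑g) (reindex (by omega) a)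
      = 0) := by
  refine ⟨vbracket_antisymm α f g, fun a => ?_⟩
  have hfgh := vcirc_preLie α f hg hh a
  have hghf := vcirc_preLie α g hh hf (reindex (by omega) a)
  have hhfg := vcirc_preLie α h hf hg (reindex (by omega) a)
  rw [vbracket_vbracket, vbracket_vbracket, vbracket_vbracket, Nat.mul_comm n m,
    Nat.mul_comm p n, Nat.mul_comm p m]
  rw [Nat.mul_comm p m] at hghf
  exact jacobi_of_preLie_relations (neg_one_pow_mul_self _) (neg_one_pow_mul_self _)
    (neg_one_pow_mul_self _) hfgh hghf hhfg
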